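/- arXiv:math/0408189 — 8 statements merged into one kernel-verified Lean document; each statement's English description precedes it below -/
import Mathlib

section
/- Let K be a field, let D_1, …, D_k ∈ K[X] be pairwise coprime polynomials with D := D_1 ⋯ D_k ≠ 0, and let N ∈ K[X]. Suppose N/D = p + r_1/D_1 + ⋯ + r_k/D_k in K(X) with deg r_i < deg D_i for all i. For each i with 2 ≤ i ≤ k, suppose s_i, p_i ∈ K[X] satisfy 1/(D_1 D_i) = s_i/D_1 + p_i/D_i in K(X) (equivalently s_i D_i + p_i D_1 = 1). Then r_1 equals the remainder of the polynomial N·s_2·s_3⋯s_k upon Euclidean division by D_1. -/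
open Polynomial

/-- Second part of Theorem `t-ppfraction-main1`: `r₁` is the remainder of
`N·s₂⋯s_k` upon Euclidean division by `D₁`.  Here the factors `D₂,…,D_k` are
indexed by `Fin k` via `i ↦ Ds i.succ`, and `Ds 0` plays the role of `D₁`. -/
theorem stmt3 {K : Type*} [Field K] (k : ℕ) (Ds : Fin (k + 1) → K[X])
    (hcop : ∀ i j, i ≠ j → IsCoprime (Ds i) (Ds j))
    (hD : (∏ i, Ds i) ≠ 0) (N : K[X])
    (p : K[X]) (r : Fin (k + 1) → K[X])
    (hr : ∀ i, (r i).degree < (Ds i).degree)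
    (h1 : algebraMap K[X] (RatFunc K) N / algebraMap K[X] (RatFunc K) (∏ i, Ds i) =
      algebraMap K[X] (RatFunc K) p +
        ∑ i, algebraMap K[X] (RatFunc K) (r i) / algebraMap K[X] (RatFunc K) (Ds i))
    (s ps : Fin k → K[X])
    (hs : ∀ i : Fin k, s i * Ds i.succ + ps i * Ds 0 = 1) :
    r 0 = (N * ∏ i, s i) % Ds 0 := by
  classical
  have hDne : ∀ i, Ds i ≠ 0 := by
    intro i h
    exact hD (Finset.prod_eq_zero (Finset.mem_univ i) h)
  set φ := algebraMap K[X] (RatFunc K) with hφ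
  have hφne : ∀ q : K[X], q ≠ 0 → φ q ≠ 0 := fun q hq => RatFunc.algebraMap_ne_zero hq
  set E : Fin (k + 1) → K[X] := fun i => ∏ j ∈ Finset.univ.erase i, Ds j with hE
  have hDE : ∀ i, Ds i * E i = ∏ j, Ds j := fun i =>
    Finset.mul_prod_erase Finset.univ Ds (Finset.mem_univ i)
  -- clear denominators
  have key : N = p * (∏ j, Ds j) + ∑ i, r i * E i := by
    apply RatFunc.algebraMap_injective K
    have hφD : φ (∏ j, Ds j) ≠ 0 := hφne _ hD
    have h2 : φ N = (φ p + ∑ i, φ (r i) / φ (Ds i)) * φ (∏ j, Ds j) := by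
      rw [← h1, div_mul_cancel₀ _ hφD]
    rw [map_add, map_mul, map_sum, h2, add_mul, Finset.sum_mul]
    congr 1
    apply Finset.sum_congr rfl
    intro i _
    rw [map_mul, ← hDE i, map_mul, div_mul_eq_mul_div, mul_comm (φ (Ds i)),
      mul_div_assoc, mul_div_cancel_right₀ _ (hφne _ (hDne i))]
  -- work modulo Ds 0
  set I : Ideal K[X] := Ideal.span {Ds 0} with hI
  set f := Ideal.Quotient.mk I with hf
  have hf0 : f (Ds 0) = 0 := by
    rw [hf, Ideal.Quotient.eq_zero_iff_mem, hI]
    exact Ideal.mem_span_singleton_self _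
  have hfD : f (∏ j, Ds j) = 0 := by
    rw [← hDE 0, map_mul, hf0, zero_mul]
  have hfE : ∀ i, i ≠ 0 → f (E i) = 0 := by
    intro i hi
    have h0mem : (0 : Fin (k+1)) ∈ Finset.univ.erase i :=
      Finset.mem_erase.2 ⟨fun h => hi h.symm, Finset.mem_univ _⟩
    rw [hE]
    simp only
    rw [← Finset.mul_prod_erase _ Ds h0mem, map_mul, hf0, zero_mul]
  have hfN : f N = f (r 0) * f (E 0) := by
    rw [key, map_add, map_mul, hfD, mul_zero, zero_add, map_sum]
    rw [Finset.sum_eq_single 0]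
    · rw [map_mul]
    · intro i _ hi
      rw [map_mul, hfE i hi, mul_zero]
    · intro h; exact absurd (Finset.mem_univ _) h
  have hE0 : E 0 = ∏ i : Fin k, Ds i.succ := by
    have := hDE 0
    rw [Fin.prod_univ_succ] at this
    exact mul_left_cancel₀ (hDne 0) this
  have hfs : ∀ i : Fin k, f (s i * Ds i.succ) = 1 := by
    intro i
    have : s i * Ds i.succ = 1 - ps i * Ds 0 := by linear_combination hs i
    rw [this, map_sub, map_one, map_mul, hf0, mul_zero, sub_zero]
  have hfM : f (N * ∏ i, s i) = f (r 0) := by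
    rw [map_mul, hfN, mul_assoc]
    have : f (E 0) * f (∏ i, s i) = 1 := by
      rw [← map_mul, hE0, ← Finset.prod_mul_distrib]
      have : ∀ i : Fin k, Ds i.succ * s i = s i * Ds i.succ := fun i => mul_comm _ _
      rw [Finset.prod_congr rfl fun i _ => this i, map_prod]
      simp [hfs]
    rw [this, mul_one]
  -- conclude
  set M := N * ∏ i, s i with hM
  have hdvd : Ds 0 ∣ M - r 0 := by
    rw [← Ideal.mem_span_singleton, ← hI, ← Ideal.Quotient.eq_zero_iff_mem, map_sub, ← hf,
      hfM, sub_self]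
  have hdvd2 : Ds 0 ∣ M % Ds 0 - r 0 := by
    have h3 : M % Ds 0 = M - Ds 0 * (M / Ds 0) := by
      rw [eq_sub_iff_add_eq, add_comm, EuclideanDomain.div_add_mod]
    have : M % Ds 0 - r 0 = (M - r 0) - Ds 0 * (M / Ds 0) := by rw [h3]; ring
    rw [this]
    exact dvd_sub hdvd (Dvd.intro _ rfl)
  have hdeg : (M % Ds 0 - r 0).degree < (Ds 0).degree := by
    refine lt_of_le_of_lt (Polynomial.degree_sub_le _ _) (max_lt ?_ (hr 0))
    exact EuclideanDomain.mod_lt _ (hDne 0)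
  have := Polynomial.eq_zero_of_dvd_of_degree_lt hdvd2 hdeg
  linear_combination -this
end

section
/- Let K be a field, let p, q ∈ K[X] be nonzero polynomials, and let r, s ∈ K[X] satisfy r·q + s·p = 1 (equivalently, 1/(pq) = r/p + s/q in K(X)). Then for all positive integers m and n, the following identity holds in K(X): 1/(p^m q^n) = Σ_{i=0}^{m−1} C(n−1+i, i) · r^n s^i / p^{m−i} + Σ_{j=0}^{n−1} C(m−1+j, j) · r^j s^m / q^{n−j}, where C(a, b) denotes the binomial coefficient a choose b. -/
/-!
Put `x = s p` and `y = r q`, so that `x + y = 1`. Multiplying by `p^m q^n` turns the claim into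
`y^n ∑_{i<m} C(n-1+i, i) x^i + x^m ∑_{j<n} C(m-1+j, j) y^j = 1`, the statement that among
independent trials with success probability `x`, either the `n`-th failure precedes the `m`-th
success or vice versa. This identity is proved by induction on `m`; the inductive step compares
the sums `∑_j C(m+j, m) y^j` for consecutive `m` using Pascal's rule.
-/

open Polynomial Finset

section CommRing

variable {R : Type*} [CommRing R] {x y : R}

theorem sum_range_add_choose_mul_pow_of_add_eq_one (hxy : x + y = 1) (m : ℕ) :
    ∀ N : ℕ, ∑ j ∈ range N, ((m + j).choose m : R) * y ^ j =
      x * ∑ j ∈ range N, ((m + 1 + j).choose (m + 1) : R) * y ^ j +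
        ((m + N).choose (m + 1) : R) * y ^ N
  | 0 => by simp
  | N + 1 => by
    have pascal : ((m + 1 + N).choose (m + 1) : R) =
        ((m + N).choose m : R) + ((m + N).choose (m + 1) : R) := by
      rw [add_right_comm, Nat.choose_succ_succ', Nat.cast_add]
    rw [sum_range_succ, sum_range_succ, sum_range_add_choose_mul_pow_of_add_eq_one hxy m N,
      ← add_assoc m N 1, add_right_comm m N 1]
    linear_combination -y ^ N * pascal - (m + 1 + N).choose (m + 1) * y ^ N * hxy

theorem sum_add_choose_partition_of_add_eq_one (hxy : x + y = 1) (n : ℕ) :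
    ∀ m : ℕ, y ^ (n + 1) * ∑ i ∈ range (m + 1), ((n + i).choose n : R) * x ^ i +
      x ^ (m + 1) * ∑ j ∈ range (n + 1), ((m + j).choose m : R) * y ^ j = 1
  | 0 => by
    simp only [zero_add, sum_range_one, Nat.choose_self, Nat.choose_zero_right, Nat.cast_one,
      add_zero, pow_zero, pow_one, one_mul, mul_one]
    linear_combination -geom_sum_mul y (n + 1) + (∑ j ∈ range (n + 1), y ^ j) * hxy
  | m + 1 => by
    have ih := sum_add_choose_partition_of_add_eq_one hxy n m
    have shift := sum_range_add_choose_mul_pow_of_add_eq_one hxy m (n + 1)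
    rw [show m + (n + 1) = n + (m + 1) by ring, ← Nat.choose_symm_add] at shift
    rw [sum_range_succ]
    linear_combination ih - x ^ (m + 1) * shift

end CommRing

theorem one_div_pow_mul_pow_eq_sum_add_sum {F : Type*} [Field F] {P Q A B : F} (hP : P ≠ 0)
    (hQ : Q ≠ 0) (hAB : A * Q + B * P = 1) (m n : ℕ) :
    1 / (P ^ (m + 1) * Q ^ (n + 1)) =
      ∑ i ∈ range (m + 1), ((n + i).choose i : F) * (A ^ (n + 1) * B ^ i) / P ^ (m + 1 - i) +
        ∑ j ∈ range (n + 1), ((m + j).choose j : F) * (A ^ j * B ^ (m + 1)) / Q ^ (n + 1 - j) := by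
  rw [← sum_add_choose_partition_of_add_eq_one (x := B * P) (y := A * Q)
    (by linear_combination hAB) n m, add_div, mul_sum, mul_sum, sum_div, sum_div]
  congr 1 <;> refine sum_congr rfl fun i hi => ?_ <;> have hi := mem_range.mp hi
  · rw [pow_sub₀ _ hP (by omega), Nat.choose_symm_add]
    field_simp
    ring
  · rw [pow_sub₀ _ hQ (by omega), Nat.choose_symm_add]
    field_simp
    ring

/-- Lemma `l-frac-power`: partial fraction expansion of `1/(p^m q^n)` from a
Bézout relation `r·q + s·p = 1`. -/
theorem stmt4 {K : Type*} [Field K] (p q r s : K[X]) (hp : p ≠ 0) (hq : q ≠ 0)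
    (hrs : r * q + s * p = 1) (m n : ℕ) (hm : 0 < m) (hn : 0 < n) :
    1 / algebraMap K[X] (RatFunc K) (p ^ m * q ^ n) =
      (∑ i ∈ Finset.range m, ((n - 1 + i).choose i : RatFunc K) *
        algebraMap K[X] (RatFunc K) (r ^ n * s ^ i) /
          algebraMap K[X] (RatFunc K) (p ^ (m - i))) +
      ∑ j ∈ Finset.range n, ((m - 1 + j).choose j : RatFunc K) *
        algebraMap K[X] (RatFunc K) (r ^ j * s ^ m) /
          algebraMap K[X] (RatFunc K) (q ^ (n - j)) := by
  obtain ⟨m, rfl⟩ := Nat.exists_eq_add_one_of_ne_zero hm.ne'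
  obtain ⟨n, rfl⟩ := Nat.exists_eq_add_one_of_ne_zero hn.ne'
  simp only [Nat.add_sub_cancel, map_mul, map_pow]
  exact one_div_pow_mul_pow_eq_sum_add_sum (RatFunc.algebraMap_ne_zero hp)
    (RatFunc.algebraMap_ne_zero hq) (by simpa using congrArg (algebraMap K[X] (RatFunc K)) hrs) m n
end

section
/- Let R be a commutative ring, let r, s ∈ R, and let A : ℕ × ℕ → R be a function satisfying A(m, n) = r·A(m, n−1) + s·A(m−1, n) for all m ≥ 1 and n ≥ 1. Then for all m ≥ 1 and n ≥ 1, A(m, n) = Σ_{i=0}^{m−1} C(n−1+i, i) · r^n s^i · A(m−i, 0) + Σ_{j=0}^{n−1} C(m−1+j, j) · r^j s^m · A(0, n−j), where C(a, b) denotes the binomial coefficient a choose b. -/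
lemma aux5 {R : Type*} [CommRing R] (r s : R) (A : ℕ × ℕ → R)
    (hA : ∀ m n : ℕ, 1 ≤ m → 1 ≤ n →
      A (m, n) = r * A (m, n - 1) + s * A (m - 1, n)) :
    ∀ m n : ℕ,
      A (m + 1, n + 1) =
        (∑ i ∈ Finset.range (m + 1), ((n + i).choose i : R) * r ^ (n + 1) * s ^ i * A (m + 1 - i, 0)) +
        ∑ j ∈ Finset.range (n + 1), ((m + j).choose j : R) * r ^ j * s ^ (m + 1) * A (0, n + 1 - j) := by
  suffices H : ∀ k m n : ℕ, m + n ≤ k →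
      A (m + 1, n + 1) =
        (∑ i ∈ Finset.range (m + 1), ((n + i).choose i : R) * r ^ (n + 1) * s ^ i * A (m + 1 - i, 0)) +
        ∑ j ∈ Finset.range (n + 1), ((m + j).choose j : R) * r ^ j * s ^ (m + 1) * A (0, n + 1 - j) by
    exact fun m n => H (m + n) m n le_rfl
  intro k
  induction k with
  | zero =>
    intro m n h
    obtain ⟨rfl, rfl⟩ : m = 0 ∧ n = 0 := by omega
    have h1 := hA 1 1 le_rfl le_rfl
    simpa using h1
  | succ k ih =>
    intro m n h
    match m, n with
    | 0, 0 =>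
      have h1 := hA 1 1 le_rfl le_rfl
      simpa using h1
    | 0, n + 1 =>
      have h1 := hA 1 (n + 2) (by omega) (by omega)
      have ih1 := ih 0 n (by omega)
      simp only [show (1:ℕ) - 1 = 0 from rfl, show n + 2 - 1 = n + 1 from rfl] at h1
      rw [h1, ih1, Finset.sum_range_one, Finset.sum_range_one,
        Finset.sum_range_succ' _ (n + 1), mul_add, Finset.mul_sum]
      have ht : ∀ j ∈ Finset.range (n + 1),
          ((0 + (j + 1)).choose (j + 1) : R) * r ^ (j + 1) * s ^ (0 + 1) * A (0, n + 1 + 1 - (j + 1))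
          = r * (((0 + j).choose j : R) * r ^ j * s ^ (0 + 1) * A (0, n + 1 - j)) := by
        intro j _
        rw [show n + 1 + 1 - (j + 1) = n + 1 - j from by omega]
        simp only [Nat.zero_add, Nat.choose_self, Nat.cast_one]
        ring
      rw [Finset.sum_congr rfl ht]
      simp only [Nat.zero_add, Nat.add_zero, Nat.choose_self, Nat.choose_zero_right,
        Nat.cast_one, Nat.sub_zero, pow_zero, one_mul, mul_one]
      ring
    | m + 1, 0 =>
      have h1 := hA (m + 2) 1 (by omega) (by omega)
      have ih1 := ih m 0 (by omega)
      simp only [show (1:ℕ) - 1 = 0 from rfl, show m + 2 - 1 = m + 1 from rfl] at h1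
      rw [h1, ih1, Finset.sum_range_one, Finset.sum_range_one,
        Finset.sum_range_succ' _ (m + 1), mul_add, Finset.mul_sum]
      have ht : ∀ i ∈ Finset.range (m + 1),
          ((0 + (i + 1)).choose (i + 1) : R) * r ^ (0 + 1) * s ^ (i + 1) * A (m + 1 + 1 - (i + 1), 0)
          = s * (((0 + i).choose i : R) * r ^ (0 + 1) * s ^ i * A (m + 1 - i, 0)) := by
        intro i _
        rw [show m + 1 + 1 - (i + 1) = m + 1 - i from by omega]
        simp only [Nat.zero_add, Nat.choose_self, Nat.cast_one]
        ring
      rw [Finset.sum_congr rfl ht]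
      simp only [Nat.zero_add, Nat.add_zero, Nat.choose_self, Nat.choose_zero_right,
        Nat.cast_one, Nat.sub_zero, pow_zero, one_mul, mul_one]
      ring
    | m + 1, n + 1 =>
      have h1 := hA (m + 2) (n + 2) (by omega) (by omega)
      have ih1 := ih (m + 1) n (by omega)
      have ih2 := ih m (n + 1) (by omega)
      simp only [show m + 2 - 1 = m + 1 from rfl, show n + 2 - 1 = n + 1 from rfl] at h1
      rw [h1, ih1, ih2]
      have e1 : (∑ i ∈ Finset.range (m + 2), ((n + 1 + i).choose i : R) * r ^ (n + 2) * s ^ i * A (m + 2 - i, 0))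
          = r * (∑ i ∈ Finset.range (m + 2), ((n + i).choose i : R) * r ^ (n + 1) * s ^ i * A (m + 2 - i, 0))
          + s * (∑ i ∈ Finset.range (m + 1), ((n + 1 + i).choose i : R) * r ^ (n + 2) * s ^ i * A (m + 1 - i, 0)) := by
        rw [Finset.mul_sum, Finset.mul_sum, Finset.sum_range_succ' _ (m + 1),
          Finset.sum_range_succ' _ (m + 1)]
        have ht : ∀ i ∈ Finset.range (m + 1),
            ((n + 1 + (i + 1)).choose (i + 1) : R) * r ^ (n + 2) * s ^ (i + 1) * A (m + 2 - (i + 1), 0)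
            = r * (((n + (i + 1)).choose (i + 1) : R) * r ^ (n + 1) * s ^ (i + 1) * A (m + 2 - (i + 1), 0))
              + s * (((n + 1 + i).choose i : R) * r ^ (n + 2) * s ^ i * A (m + 1 - i, 0)) := by
          intro i _
          have hc : (n + 1 + (i + 1)).choose (i + 1) = (n + 1 + i).choose i + (n + 1 + i).choose (i + 1) := by
            rw [show n + 1 + (i + 1) = (n + 1 + i) + 1 from by ring, Nat.choose_succ_succ]
          rw [hc, show m + 2 - (i + 1) = m + 1 - i from by omega,
            show n + (i + 1) = n + 1 + i from by ring]
          push_cast; ring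
        rw [Finset.sum_congr rfl ht, Finset.sum_add_distrib]
        simp only [Nat.add_zero, Nat.choose_zero_right, Nat.cast_one, Nat.sub_zero, pow_zero,
          one_mul, mul_one]
        ring
      have e2 : (∑ j ∈ Finset.range (n + 2), ((m + 1 + j).choose j : R) * r ^ j * s ^ (m + 2) * A (0, n + 2 - j))
          = r * (∑ j ∈ Finset.range (n + 1), ((m + 1 + j).choose j : R) * r ^ j * s ^ (m + 2) * A (0, n + 1 - j))
          + s * (∑ j ∈ Finset.range (n + 2), ((m + j).choose j : R) * r ^ j * s ^ (m + 1) * A (0, n + 2 - j)) := by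
        rw [Finset.mul_sum, Finset.mul_sum, Finset.sum_range_succ' _ (n + 1),
          Finset.sum_range_succ' _ (n + 1)]
        have ht : ∀ j ∈ Finset.range (n + 1),
            ((m + 1 + (j + 1)).choose (j + 1) : R) * r ^ (j + 1) * s ^ (m + 2) * A (0, n + 2 - (j + 1))
            = r * (((m + 1 + j).choose j : R) * r ^ j * s ^ (m + 2) * A (0, n + 1 - j))
              + s * (((m + (j + 1)).choose (j + 1) : R) * r ^ (j + 1) * s ^ (m + 1) * A (0, n + 2 - (j + 1))) := by
          intro j _
          have hc : (m + 1 + (j + 1)).choose (j + 1) = (m + 1 + j).choose j + (m + 1 + j).choose (j + 1) := by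
            rw [show m + 1 + (j + 1) = (m + 1 + j) + 1 from by ring, Nat.choose_succ_succ]
          rw [hc, show n + 2 - (j + 1) = n + 1 - j from by omega,
            show m + (j + 1) = m + 1 + j from by ring]
          push_cast; ring
        rw [Finset.sum_congr rfl ht, Finset.sum_add_distrib]
        simp only [Nat.add_zero, Nat.choose_zero_right, Nat.cast_one, Nat.sub_zero, pow_zero,
          one_mul, mul_one]
        ring
      rw [e1, e2]
      ring

/-- Solution of the recurrence `A(m,n) = r·A(m,n−1) + s·A(m−1,n)` in terms of the
boundary values `A(i,0)` and `A(0,j)`. -/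
theorem stmt5 {R : Type*} [CommRing R] (r s : R) (A : ℕ × ℕ → R)
    (hA : ∀ m n : ℕ, 1 ≤ m → 1 ≤ n →
      A (m, n) = r * A (m, n - 1) + s * A (m - 1, n)) :
    ∀ m n : ℕ, 1 ≤ m → 1 ≤ n →
      A (m, n) =
        (∑ i ∈ Finset.range m, ((n - 1 + i).choose i : R) * r ^ n * s ^ i * A (m - i, 0)) +
        ∑ j ∈ Finset.range n, ((m - 1 + j).choose j : R) * r ^ j * s ^ m * A (0, n - j) := by
  intro m n hm hn
  obtain ⟨m, rfl⟩ : ∃ m', m = m' + 1 := ⟨m - 1, by omega⟩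
  obtain ⟨n, rfl⟩ : ∃ n', n = n' + 1 := ⟨n - 1, by omega⟩
  simpa using aux5 r s A hA m n
end

section
/- Let K be a field, let N, E ∈ K[X] with E(0) ≠ 0, let m be a positive integer, and set D := X^m · E. Let N/D = p + r/X^m + s/E be the ppfraction expansion of N/D in K(X) with respect to (X^m, E), so p, r, s ∈ K[X], deg r < m, and deg s < deg E. Then, regarding N and E as formal power series in K[[X]] (where E is invertible since its constant coefficient is nonzero), the coefficient of X^i in r equals the coefficient of X^i in the power series N·E^{−1} for every i with 0 ≤ i < m; equivalently, r is the truncation ⌈X^m⌉(N/E) of the power series N/E obtained by deleting all terms X^n with n ≥ m. -/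
/-!
Clearing denominators gives `N = r E + X^m (p E + s)` in `K[X]`; since `E` is a unit in
`K⟦X⟧`, this says `N / E ≡ r` modulo `X^m`.
-/

open Polynomial

theorem Polynomial.eq_mul_add_mul_add_mul_of_algebraMap_div_eq {K : Type*} [Field K]
    {N A B p r s : K[X]} (hA : A ≠ 0) (hB : B ≠ 0)
    (h : algebraMap K[X] (RatFunc K) N / algebraMap K[X] (RatFunc K) (A * B) =
      algebraMap K[X] (RatFunc K) p +
        algebraMap K[X] (RatFunc K) r / algebraMap K[X] (RatFunc K) A +
        algebraMap K[X] (RatFunc K) s / algebraMap K[X] (RatFunc K) B) :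
    N = p * (A * B) + r * B + s * A := by
  have hinj : Function.Injective (algebraMap K[X] (RatFunc K)) := IsFractionRing.injective _ _
  have hA' : algebraMap K[X] (RatFunc K) A ≠ 0 := (map_ne_zero_iff _ hinj).mpr hA
  have hB' : algebraMap K[X] (RatFunc K) B ≠ 0 := (map_ne_zero_iff _ hinj).mpr hB
  rw [map_mul, div_eq_iff (mul_ne_zero hA' hB')] at h
  apply hinj
  rw [h]
  simp only [map_add, map_mul]
  field_simp

theorem PowerSeries.coeff_mul_inv_eq_of_eq_mul_add_X_pow_mul {K : Type*} [Field K]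
    {f r u g : PowerSeries K} {m : ℕ} (hu : constantCoeff u ≠ 0)
    (h : f = r * u + X ^ m * g) {i : ℕ} (hi : i < m) :
    coeff i (f * u⁻¹) = coeff i r := by
  have hfu : f * u⁻¹ = r + X ^ m * (g * u⁻¹) := by
    rw [h]
    linear_combination r * PowerSeries.mul_inv_cancel u hu
  rw [hfu, map_add, coeff_X_pow_mul', if_neg (Nat.not_le_of_lt hi), add_zero]

theorem stmt8_general {K : Type*} [Field K] (N E : K[X]) (hE : E.eval 0 ≠ 0)
    (m : ℕ) (p r s : K[X])
    (h : algebraMap K[X] (RatFunc K) N / algebraMap K[X] (RatFunc K) (X ^ m * E) =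
      algebraMap K[X] (RatFunc K) p +
        algebraMap K[X] (RatFunc K) r / algebraMap K[X] (RatFunc K) (X ^ m) +
        algebraMap K[X] (RatFunc K) s / algebraMap K[X] (RatFunc K) E) :
    ∀ i < m, r.coeff i =
      PowerSeries.coeff i ((N : PowerSeries K) * (E : PowerSeries K)⁻¹) := by
  intro i hi
  have hE0 : E ≠ 0 := fun h0 => hE (by simp [h0])
  have hN := eq_mul_add_mul_add_mul_of_algebraMap_div_eq (pow_ne_zero m X_ne_zero) hE0 h
  have hNps : (N : PowerSeries K) =
      (r : PowerSeries K) * (E : PowerSeries K) + PowerSeries.X ^ m * ((p * E + s : K[X]) : PowerSeries K) := by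
    rw [hN]
    push_cast
    ring
  have hEunit : PowerSeries.constantCoeff (E : PowerSeries K) ≠ 0 := by
    simpa [coeff_zero_eq_eval_zero] using hE
  rw [PowerSeries.coeff_mul_inv_eq_of_eq_mul_add_X_pow_mul hEunit hNps hi, coeff_coe]

/-- Theorem `t-ppfraction-main-0`: for `D = X^m·E` with `E(0) ≠ 0`, the numerator
`r` of the fractional part of `N/D` with respect to `X^m` is the truncation of
the power series `N/E` below degree `m`. -/
theorem stmt8 {K : Type*} [Field K] (N E : K[X]) (hE : E.eval 0 ≠ 0)
    (m : ℕ) (hm : 0 < m) (p r s : K[X])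
    (hr : r.degree < (m : WithBot ℕ)) (hs : s.degree < E.degree)
    (h : algebraMap K[X] (RatFunc K) N / algebraMap K[X] (RatFunc K) (X ^ m * E) =
      algebraMap K[X] (RatFunc K) p +
        algebraMap K[X] (RatFunc K) r / algebraMap K[X] (RatFunc K) (X ^ m) +
        algebraMap K[X] (RatFunc K) s / algebraMap K[X] (RatFunc K) E) :
    ∀ i < m, r.coeff i =
      PowerSeries.coeff i ((N : PowerSeries K) * (E : PowerSeries K)⁻¹) :=
  stmt8_general N E hE m p r s h
end

section
/- Let K be a field, let N, E ∈ K[X] with E(0) ≠ 0, let m be a positive integer, and set D := X^m · E. Let N/D = p + r/X^m + s/E be the ppfraction expansion of N/D in K(X) with respect to (X^m, E), so deg r < m and deg s < deg E. Then, expanding the rational function N/D as a formal Laurent series in K((X)) (via the canonical embedding of K(X) into the field of formal Laurent series at X = 0), for every i with 1 ≤ i ≤ m the coefficient of X^{−i} in this Laurent series equals the coefficient of X^{m−i} in r. -/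
/-!
At `X = 0`, `p` and `s / E` expand to power series, because `E(0) ≠ 0` makes `E` a unit of
`K⟦X⟧`; so the principal part of `N / D` is that of `r / X ^ m`, which is `r` shifted by `-m`.
-/

open Polynomial HahnSeries

namespace PowerSeries

variable {K : Type*} [Field K]

theorem coe_div_of_constantCoeff_ne_zero (f : PowerSeries K) {g : PowerSeries K}
    (hg : constantCoeff g ≠ 0) :
    (f : LaurentSeries K) / (g : LaurentSeries K) =
      ((f * g⁻¹ : PowerSeries K) : LaurentSeries K) := by
  have hg0 : (g : LaurentSeries K) ≠ 0 := by
    rw [Ne, ← map_zero (ofPowerSeries ℤ K), ofPowerSeries_injective.eq_iff]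
    rintro rfl
    exact hg (map_zero _)
  rw [div_eq_iff hg0, ← coe_mul, mul_assoc, PowerSeries.inv_mul_cancel _ hg, mul_one]

end PowerSeries

namespace LaurentSeries

variable {K : Type*} [Field K]

theorem coeff_div_single_one (x : LaurentSeries K) (a n : ℤ) :
    (x / single a 1).coeff n = x.coeff (n + a) := by
  rw [div_eq_mul_inv, inv_single, inv_one, mul_comm, ← add_neg_cancel_right n a,
    coeff_single_mul_add, one_mul, add_neg_cancel_right]

end LaurentSeries

namespace RatFunc

variable {K : Type*} [Field K]

theorem coe_algebraMap_polynomial (q : K[X]) :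
    ((algebraMap K[X] (RatFunc K) q : RatFunc K) : LaurentSeries K) =
      ((q : PowerSeries K) : LaurentSeries K) :=
  (coe_coe q).symm

theorem coeff_coe_algebraMap_of_neg (q : K[X]) {n : ℤ} (hn : n < 0) :
    ((algebraMap K[X] (RatFunc K) q : RatFunc K) : LaurentSeries K).coeff n = 0 := by
  rw [coe_algebraMap_polynomial, PowerSeries.coeff_coe, if_pos hn]

theorem coeff_coe_div_of_eval_zero_ne_zero (s E : K[X]) (hE : E.eval 0 ≠ 0) {n : ℤ}
    (hn : n < 0) :
    ((algebraMap K[X] (RatFunc K) s / algebraMap K[X] (RatFunc K) E : RatFunc K) :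
      LaurentSeries K).coeff n = 0 := by
  have hE' : PowerSeries.constantCoeff (E : PowerSeries K) ≠ 0 := by
    rwa [← PowerSeries.coeff_zero_eq_constantCoeff_apply, coeff_coe, coeff_zero_eq_eval_zero]
  rw [map_div₀, coe_algebraMap_polynomial, coe_algebraMap_polynomial,
    PowerSeries.coe_div_of_constantCoeff_ne_zero _ hE', PowerSeries.coeff_coe, if_pos hn]

theorem coeff_coe_div_X_pow (r : K[X]) {m i : ℕ} (hi : i ≤ m) :
    ((algebraMap K[X] (RatFunc K) r / algebraMap K[X] (RatFunc K) (Polynomial.X ^ m) :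
      RatFunc K) : LaurentSeries K).coeff (-(i : ℤ)) = r.coeff (m - i) := by
  have hXm : ((algebraMap K[X] (RatFunc K) (Polynomial.X ^ m) : RatFunc K) : LaurentSeries K) =
      single (m : ℤ) 1 := by
    rw [map_pow, map_pow, algebraMap_X, coe_X, ← single_one_eq_pow]
  have hexp : -(i : ℤ) + m = ((m - i : ℕ) : ℤ) := by omega
  rw [map_div₀, hXm, LaurentSeries.coeff_div_single_one, hexp, coe_algebraMap_polynomial,
    LaurentSeries.coeff_coe_powerSeries, coeff_coe]

end RatFunc

theorem stmt9_general {K : Type*} [Field K] (N E : K[X]) (hE : E.eval 0 ≠ 0)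
    (m : ℕ) (p r s : K[X])
    (h : algebraMap K[X] (RatFunc K) N / algebraMap K[X] (RatFunc K) (X ^ m * E) =
      algebraMap K[X] (RatFunc K) p +
        algebraMap K[X] (RatFunc K) r / algebraMap K[X] (RatFunc K) (X ^ m) +
        algebraMap K[X] (RatFunc K) s / algebraMap K[X] (RatFunc K) E) :
    ∀ i : ℕ, 1 ≤ i → i ≤ m →
      ((algebraMap K[X] (RatFunc K) N /
          algebraMap K[X] (RatFunc K) (X ^ m * E) : RatFunc K) :
        LaurentSeries K).coeff (-(i : ℤ)) = r.coeff (m - i) := by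
  intro i hi him
  have hneg : -(i : ℤ) < 0 := by omega
  rw [h, map_add, map_add, HahnSeries.coeff_add, HahnSeries.coeff_add,
    RatFunc.coeff_coe_algebraMap_of_neg p hneg, RatFunc.coeff_coe_div_X_pow r him,
    RatFunc.coeff_coe_div_of_eval_zero_ne_zero s E hE hneg, zero_add, add_zero]

/-- For `D = X^m·E` with `E(0) ≠ 0`, the negative-degree coefficients of the
Laurent series expansion of `N/D` at `X = 0` are the coefficients of the
numerator `r` of the fractional part of `N/D` with respect to `X^m`:
`[X^(−i)] N/D = [X^(m−i)] r` for `1 ≤ i ≤ m`. -/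
theorem stmt9 {K : Type*} [Field K] (N E : K[X]) (hE : E.eval 0 ≠ 0)
    (m : ℕ) (hm : 0 < m) (p r s : K[X])
    (hr : r.degree < (m : WithBot ℕ)) (hs : s.degree < E.degree)
    (h : algebraMap K[X] (RatFunc K) N / algebraMap K[X] (RatFunc K) (X ^ m * E) =
      algebraMap K[X] (RatFunc K) p +
        algebraMap K[X] (RatFunc K) r / algebraMap K[X] (RatFunc K) (X ^ m) +
        algebraMap K[X] (RatFunc K) s / algebraMap K[X] (RatFunc K) E) :
    ∀ i : ℕ, 1 ≤ i → i ≤ m →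
      ((algebraMap K[X] (RatFunc K) N /
          algebraMap K[X] (RatFunc K) (X ^ m * E) : RatFunc K) :
        LaurentSeries K).coeff (-(i : ℤ)) = r.coeff (m - i) :=
  stmt9_general N E hE m p r s h
end

section
/- Let K be a field and let P, N, D ∈ K[X] with P ≠ 0, D ≠ 0, and deg N < deg D. Set p := natDegree P, d := natDegree D, and F := P·D + N, so that F/D = P + N/D is the ppfraction of the rational function R := F/D. Then there exist polynomials q, s ∈ K[X] with deg s < deg(D.reverse) such that in K(X): F.reverse / (X^{p+1} · D.reverse) = q + P.reverse / X^{p+1} + s / D.reverse. In other words, since X^{p+1} and D.reverse are coprime (the constant coefficient of D.reverse is the leading coefficient of D, hence nonzero), the fractional part of the rational function X^{−1}·R(X^{−1}) = F.reverse/(X^{p+1}·D.reverse) with respect to X^{p+1} is P.reverse/X^{p+1}, which encodes the polynomial part P of R. -/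
open Polynomial

lemma reflect_eq_mul_reverse {K : Type*} [Field K] (N : K[X]) {m : ℕ}
    (h : N.natDegree ≤ m) : reflect m N = X ^ (m - N.natDegree) * N.reverse := by
  obtain ⟨k, rfl⟩ : ∃ k, m = N.natDegree + k := ⟨m - N.natDegree, (Nat.add_sub_cancel' h).symm⟩
  have h1 := reflect_mul N (1 : K[X]) (le_refl N.natDegree) (by simp : (1 : K[X]).natDegree ≤ k)
  rw [mul_one] at h1
  have h2 : reflect k (1 : K[X]) = X ^ k := by
    simpa using reflect_monomial k 0 (R := K)
  rw [h1, h2, Nat.add_sub_cancel_left, reverse, mul_comm]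

/-- Proposition `p-ppfraction-ira` (Gessel): the polynomial part `P` of
`R = (P·D + N)/D` is encoded as the fractional part of
`X⁻¹·R(X⁻¹) = F.reverse/(X^(p+1)·D.reverse)` with respect to `X^(p+1)`,
where `p = natDegree P` and `F = P·D + N`. -/
theorem stmt10 {K : Type*} [Field K] (P N D : K[X]) (hP : P ≠ 0) (hD : D ≠ 0)
    (hN : N.degree < D.degree) :
    ∃ q s : K[X], s.degree < D.reverse.degree ∧
      algebraMap K[X] (RatFunc K) (P * D + N).reverse /
          algebraMap K[X] (RatFunc K) (X ^ (P.natDegree + 1) * D.reverse) =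
        algebraMap K[X] (RatFunc K) q +
          algebraMap K[X] (RatFunc K) P.reverse /
            algebraMap K[X] (RatFunc K) (X ^ (P.natDegree + 1)) +
          algebraMap K[X] (RatFunc K) s / algebraMap K[X] (RatFunc K) D.reverse := by
  have hDrev : D.reverse ≠ 0 := by simpa [reverse_eq_zero] using hD
  have hDrev' : algebraMap K[X] (RatFunc K) D.reverse ≠ 0 :=
    RatFunc.algebraMap_ne_zero hDrev
  have hXp : (X : K[X]) ^ (P.natDegree + 1) ≠ 0 := pow_ne_zero _ X_ne_zero
  have hXp' : algebraMap K[X] (RatFunc K) ((X : K[X]) ^ (P.natDegree + 1)) ≠ 0 :=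
    RatFunc.algebraMap_ne_zero hXp
  have hdeg : N.degree < (P * D).degree := by
    rw [degree_mul]
    calc N.degree < D.degree := hN
    _ ≤ P.degree + D.degree := by
        rw [degree_eq_natDegree hP, degree_eq_natDegree hD, ← Nat.cast_add]
        exact_mod_cast Nat.le_add_left _ _
  have hFn : (P * D + N).natDegree = P.natDegree + D.natDegree := by
    rw [natDegree_eq_of_degree_eq (degree_add_eq_left_of_degree_lt hdeg),
      natDegree_mul hP hD]
  by_cases hN0 : N = 0
  · refine ⟨0, 0, ?_, ?_⟩
    · rw [degree_zero]
      exact bot_lt_iff_ne_bot.mpr (mt degree_eq_bot.mp hDrev)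
    · subst hN0
      rw [add_zero, reverse_mul (by simp [hP, hD]), map_mul, map_mul, map_zero]
      generalize algebraMap K[X] (RatFunc K) ((X : K[X]) ^ (P.natDegree + 1)) = x at *
      generalize algebraMap K[X] (RatFunc K) D.reverse = y at *
      field_simp
      ring
  · have hNd : N.natDegree < D.natDegree := natDegree_lt_natDegree hN0 hN
    have hkey : (P * D + N).reverse =
        P.reverse * D.reverse +
          X ^ (P.natDegree + 1) * (X ^ (D.natDegree - 1 - N.natDegree) * N.reverse) := by
      have h1 : (P * D + N).reverse = reflect (P.natDegree + D.natDegree) (P * D + N) := by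
        rw [reverse, hFn]
      have h2 : reflect (P.natDegree + D.natDegree) (P * D) = (P * D).reverse := by
        rw [reverse, natDegree_mul hP hD]
      have h3 : reflect (P.natDegree + D.natDegree) N =
          X ^ (P.natDegree + D.natDegree - N.natDegree) * N.reverse :=
        reflect_eq_mul_reverse N (le_of_lt (by omega))
      rw [h1, reflect_add, h2, h3, reverse_mul (by simp [hP, hD]), ← mul_assoc, ← pow_add]
      congr 3
      omega
    set A := X ^ (D.natDegree - 1 - N.natDegree) * N.reverse with hA
    obtain ⟨q0, s0, hdm⟩ : ∃ q0 s0, D.reverse * q0 + s0 = A ∧ s0 = A % D.reverse :=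
      ⟨A / D.reverse, A % D.reverse, EuclideanDomain.div_add_mod A D.reverse, rfl⟩
    obtain ⟨hdm, hs0⟩ := hdm
    refine ⟨q0, s0, hs0 ▸ EuclideanDomain.mod_lt _ hDrev, ?_⟩
    rw [hkey, ← hdm]
    simp only [map_add, map_mul]
    generalize algebraMap K[X] (RatFunc K) ((X : K[X]) ^ (P.natDegree + 1)) = x at *
    generalize algebraMap K[X] (RatFunc K) D.reverse = y at *
    generalize algebraMap K[X] (RatFunc K) q0 = q at *
    generalize algebraMap K[X] (RatFunc K) s0 = s at *
    generalize algebraMap K[X] (RatFunc K) P.reverse = pr at *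
    field_simp
    ring
end

section
/- Let K be a field, let N ∈ K[X], let a_1, …, a_k be distinct nonzero elements of K, let m_0, m_1, …, m_k be positive integers, and set D := X^{m_0}·(X−a_1)^{m_1}⋯(X−a_k)^{m_k}. Let N/D = p + r/X^{m_0} + (a proper fraction with denominator (X−a_1)^{m_1}⋯(X−a_k)^{m_k}) be the ppfraction expansion of N/D with respect to (X^{m_0}, (X−a_1)^{m_1}⋯(X−a_k)^{m_k}), so deg r < m_0. For 1 ≤ i ≤ k define the polynomial s_i := Σ_{j=0}^{m_0−1} (−1)^{m_i} C(m_i−1+j, j) a_i^{−(m_i+j)} X^j. Then r ≡ N·s_1·s_2⋯s_k (mod X^{m_0}); that is, for every n with 0 ≤ n < m_0, the coefficient of X^n in r equals the coefficient of X^n in N·s_1⋯s_k. -/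
/-!
Clearing denominators in `N / D = p + r / X ^ m₀ + s / P`, where `P = ∏ (X - aᵢ) ^ mᵢ`, gives
`N ≡ r · P (mod X ^ m₀)`. Since `aᵢ ≠ 0`, `(X - aᵢ) ^ mᵢ = (-aᵢ) ^ mᵢ (1 - X / aᵢ) ^ mᵢ` is a unit
of `K⟦X⟧`, and by the negative binomial series `sᵢ` is the truncation at `X ^ m₀` of its inverse.
Hence `P · s₁ ⋯ s_k ≡ 1`, and so `r ≡ N · s₁ ⋯ s_k (mod X ^ m₀)`.
-/

open Polynomial
open scoped PowerSeries

theorem IsFractionRing.eq_add_mul_add_mul_of_div_eq {R F : Type*} [CommRing R] [Field F]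
    [Algebra R F] [IsFractionRing R F] {N p r s A B : R} (hA : A ≠ 0) (hB : B ≠ 0)
    (h : algebraMap R F N / algebraMap R F (A * B) =
      algebraMap R F p + algebraMap R F r / algebraMap R F A +
        algebraMap R F s / algebraMap R F B) :
    N = p * (A * B) + r * B + s * A := by
  have hinj := IsFractionRing.injective R F
  have hA' : algebraMap R F A ≠ 0 := (map_ne_zero_iff _ hinj).mpr hA
  have hB' : algebraMap R F B ≠ 0 := (map_ne_zero_iff _ hinj).mpr hB
  apply hinj
  rw [map_mul] at h
  field_simp at h
  simp only [map_add, map_mul]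
  linear_combination h

theorem PowerSeries.trunc_mk {R : Type*} [Semiring R] (c : ℕ → R) (n : ℕ) :
    trunc n (mk c) = ∑ j ∈ Finset.range n, Polynomial.C (c j) * Polynomial.X ^ j := by
  ext i
  simp [coeff_trunc, Polynomial.coeff_X_pow]

theorem Polynomial.X_pow_dvd_mul_trunc_sub_one {R : Type*} [CommRing R] {P : R[X]} {f : R⟦X⟧}
    (h : (P : R⟦X⟧) * f = 1) (n : ℕ) : X ^ n ∣ P * PowerSeries.trunc n f - 1 := by
  rw [X_pow_dvd_iff]
  intro d hd
  rw [coeff_sub, sub_eq_zero, ← coeff_coe, ← coeff_coe, coe_mul, coe_one,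
    ← PowerSeries.coeff_coe_trunc_of_lt hd, PowerSeries.trunc_mul_trunc,
    PowerSeries.coeff_coe_trunc_of_lt hd, h]

theorem PowerSeries.coe_X_sub_C_pow_mul_mk_eq_one {K : Type*} [Field K] {a : K} (ha : a ≠ 0)
    {m : ℕ} (hm : 0 < m) :
    (((Polynomial.X - Polynomial.C a) ^ m : K[X]) : K⟦X⟧) *
      mk (fun j => (-1 : K) ^ m * ((m - 1 + j).choose j : K) * (a ^ (m + j))⁻¹) = 1 := by
  obtain ⟨d, rfl⟩ : ∃ d, m = d + 1 := ⟨m - 1, by omega⟩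
  have hbinom := congrArg (rescale a⁻¹) (mk_add_choose_mul_one_sub_pow_eq_one K d)
  rw [map_mul, map_pow, map_sub, map_one, rescale_X, rescale_mk] at hbinom
  have hlin : ((Polynomial.X - Polynomial.C a : K[X]) : K⟦X⟧) = C (-a) * (1 - C a⁻¹ * X) := by
    rw [Polynomial.coe_sub, Polynomial.coe_X, Polynomial.coe_C, mul_sub, mul_one, ← mul_assoc,
      ← map_mul, neg_mul, mul_inv_cancel₀ ha, map_neg, map_neg, map_one]
    ring
  have hmk : mk (fun j => (-1 : K) ^ (d + 1) * ((d + 1 - 1 + j).choose j : K) *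
      (a ^ (d + 1 + j))⁻¹) =
      C (((-a) ^ (d + 1))⁻¹) * mk fun j => a⁻¹ ^ j * ((d + j).choose d : K) := by
    ext j
    rw [coeff_C_mul, coeff_mk, coeff_mk, Nat.add_sub_cancel, Nat.choose_symm_add,
      ← inv_pow (-a), inv_neg, neg_pow, ← inv_pow a, pow_add]
    ring
  rw [Polynomial.coe_pow, hlin, hmk, mul_pow, ← map_pow, mul_mul_mul_comm, ← map_mul,
    mul_inv_cancel₀ (pow_ne_zero _ (neg_ne_zero.mpr ha)), map_one, one_mul, mul_comm, hbinom]

theorem Polynomial.X_pow_dvd_X_sub_C_pow_mul_sum_sub_one {K : Type*} [Field K] {a : K}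
    (ha : a ≠ 0) {m : ℕ} (hm : 0 < m) (n : ℕ) :
    X ^ n ∣ (X - C a) ^ m * (∑ j ∈ Finset.range n,
      C ((-1 : K) ^ m * ((m - 1 + j).choose j : K) * (a ^ (m + j))⁻¹) * X ^ j) - 1 := by
  rw [← PowerSeries.trunc_mk]
  exact X_pow_dvd_mul_trunc_sub_one (PowerSeries.coe_X_sub_C_pow_mul_mk_eq_one ha hm) n

theorem stmt11_general {K : Type*} [Field K] (N : K[X]) (k : ℕ) (a : Fin k → K)
    (ha0 : ∀ i, a i ≠ 0)
    (m0 : ℕ) (m : Fin k → ℕ) (hm : ∀ i, 0 < m i)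
    (p r s : K[X])
    (h : algebraMap K[X] (RatFunc K) N /
        algebraMap K[X] (RatFunc K) (X ^ m0 * ∏ i, (X - C (a i)) ^ m i) =
      algebraMap K[X] (RatFunc K) p +
        algebraMap K[X] (RatFunc K) r / algebraMap K[X] (RatFunc K) (X ^ m0) +
        algebraMap K[X] (RatFunc K) s /
          algebraMap K[X] (RatFunc K) (∏ i, (X - C (a i)) ^ m i)) :
    ∀ n < m0, r.coeff n =
      (N * ∏ i, ∑ j ∈ Finset.range m0,
        C ((-1 : K) ^ m i * ((m i - 1 + j).choose j : K) * ((a i) ^ (m i + j))⁻¹) *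
          X ^ j).coeff n := by
  set P : K[X] := ∏ i, (X - C (a i)) ^ m i
  set S : K[X] := ∏ i, ∑ j ∈ Finset.range m0,
    C ((-1 : K) ^ m i * ((m i - 1 + j).choose j : K) * ((a i) ^ (m i + j))⁻¹) * X ^ j
  have hN : N = p * (X ^ m0 * P) + r * P + s * X ^ m0 :=
    IsFractionRing.eq_add_mul_add_mul_of_div_eq (pow_ne_zero _ X_ne_zero)
      (Finset.prod_ne_zero_iff.mpr fun i _ => pow_ne_zero _ (X_sub_C_ne_zero _)) h
  set q := Ideal.Quotient.mk (Ideal.span {(X : K[X]) ^ m0})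
  have hX : q (X ^ m0) = 0 := Ideal.Quotient.eq_zero_iff_mem.mpr (Ideal.mem_span_singleton_self _)
  have hPS : q P * q S = 1 := by
    rw [map_prod, map_prod, ← Finset.prod_mul_distrib]
    refine Finset.prod_eq_one fun i _ => ?_
    rw [← map_mul, ← map_one q, Ideal.Quotient.eq, Ideal.mem_span_singleton]
    exact X_pow_dvd_X_sub_C_pow_mul_sum_sub_one (ha0 i) (hm i) m0
  have hNS : q (N * S) = q r := by
    rw [hN]
    simp only [map_add, map_mul, hX]
    linear_combination q r * hPS
  intro n hn
  have hdvd := Ideal.mem_span_singleton.mp (Ideal.Quotient.eq.mp hNS)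
  rw [eq_comm, ← sub_eq_zero, ← coeff_sub, (X_pow_dvd_iff.mp hdvd) n hn]

/-- Corollary `c-ppfraction-0`: for
`D = X^(m₀)·(X−a₁)^(m₁)⋯(X−a_k)^(m_k)` with the `aᵢ` distinct and nonzero, the
numerator `r` of the fractional part of `N/D` with respect to `X^(m₀)` agrees
with `N·s₁⋯s_k` modulo `X^(m₀)`, where
`sᵢ = Σ_{j<m₀} (−1)^(mᵢ) C(mᵢ−1+j, j) aᵢ^{−(mᵢ+j)} X^j`. -/
theorem stmt11 {K : Type*} [Field K] (N : K[X]) (k : ℕ) (a : Fin k → K)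
    (ha : Function.Injective a) (ha0 : ∀ i, a i ≠ 0)
    (m0 : ℕ) (hm0 : 0 < m0) (m : Fin k → ℕ) (hm : ∀ i, 0 < m i)
    (p r s : K[X]) (hr : r.degree < (m0 : WithBot ℕ))
    (hs : s.degree < (∏ i, (X - C (a i)) ^ m i).degree)
    (h : algebraMap K[X] (RatFunc K) N /
        algebraMap K[X] (RatFunc K) (X ^ m0 * ∏ i, (X - C (a i)) ^ m i) =
      algebraMap K[X] (RatFunc K) p +
        algebraMap K[X] (RatFunc K) r / algebraMap K[X] (RatFunc K) (X ^ m0) +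
        algebraMap K[X] (RatFunc K) s /
          algebraMap K[X] (RatFunc K) (∏ i, (X - C (a i)) ^ m i)) :
    ∀ n < m0, r.coeff n =
      (N * ∏ i, ∑ j ∈ Finset.range m0,
        C ((-1 : K) ^ m i * ((m i - 1 + j).choose j : K) * ((a i) ^ (m i + j))⁻¹) *
          X ^ j).coeff n :=
  stmt11_general N k a ha0 m0 m hm p r s h
end

section
/- Let K be a field, let h be a positive integer and m := 2h, and let P, Q ∈ K[X] be polynomials with Q(0) ≠ 0. Regarding polynomials as power series in K[[X]], let Z := ⌈X^m⌉(P·Q^{−1}), a polynomial of degree less than m. Write the bisections P = P_1 + X^h·P_2, Q = Q_1 + X^h·Q_2, Z = Z_1 + X^h·Z_2 with deg P_1 < h, deg Q_1 < h, deg Z_1 < h (and deg Z_2 < h). Then: (1) Z_1 = ⌈X^h⌉(P_1·Q_1^{−1}) (where Q_1 is invertible in K[[X]] since Q_1(0) = Q(0) ≠ 0); (2) X^h divides the polynomial P_1 − Q_1·Z_1; and (3) Z_2 = ⌈X^h⌉( ( (P_1 − Q_1·Z_1)/X^h + P_2 − Q_2·Z_1 ) · Q_1^{−1} ). -/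
/-!
For `B(0) ≠ 0` and `deg W < n`, `W = ⌈X^n⌉(A·B⁻¹)` exactly when `X^n ∣ A − B·W`, because `B` is a
unit of `K⟦X⟧` and truncations agree iff the difference is divisible by `X^n`. For `Z` this gives
`X^{2h} ∣ P − Q·Z`, and expanding the bisections,
`P − Q·Z ≡ (P₁ − Q₁·Z₁) + X^h·(P₂ − Q₂·Z₁ − Q₁·Z₂) mod X^{2h}`.
Reading this modulo `X^h`, and then dividing by `X^h`, gives two divisibilities which the criterion
turns into the formulas for `Z₁` and `Z₂`.
-/

open Polynomial

namespace PowerSeries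

variable {R : Type*}

theorem trunc_eq_trunc_iff_X_pow_dvd_sub [CommRing R] {n : ℕ} {f g : R⟦X⟧} :
    trunc n f = trunc n g ↔ X ^ n ∣ f - g := by
  simp only [X_pow_dvd_iff, map_sub, sub_eq_zero, Polynomial.ext_iff, coeff_trunc]
  exact forall_congr' fun d ↦ by by_cases hd : d < n <;> simp [hd]

theorem X_pow_dvd_coe_iff [CommSemiring R] {n : ℕ} {p : R[X]} :
    X ^ n ∣ (p : R⟦X⟧) ↔ Polynomial.X ^ n ∣ p := by
  simp only [X_pow_dvd_iff, Polynomial.X_pow_dvd_iff, Polynomial.coeff_coe]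

end PowerSeries

namespace Polynomial

theorem X_pow_dvd_and_X_pow_dvd_of_bisection {R : Type*} [CommRing R] {h : ℕ} {E F : R[X]}
    (hdvd : X ^ (2 * h) ∣ E + X ^ h * F) : X ^ h ∣ E ∧ X ^ h ∣ E /ₘ X ^ h + F := by
  have hE : X ^ h ∣ E :=
    (dvd_add_left (dvd_mul_right _ F)).mp ((pow_dvd_pow X (by omega)).trans hdvd)
  refine ⟨hE, ?_⟩
  have hEq := modByMonic_add_div E (X ^ h)
  rw [(modByMonic_eq_zero_iff_dvd (monic_X_pow h)).mpr hE, zero_add] at hEq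
  rw [two_mul, pow_add, ← hEq, ← mul_add] at hdvd
  exact (dvd_cancel_left_mem_nonZeroDivisors (monic_X_pow h).mem_nonZeroDivisors).mp hdvd

section Field

open PowerSeries

variable {K : Type*} [Field K] {n : ℕ} {A B W : K[X]}

theorem X_pow_dvd_sub_mul_iff_trunc_eq (hB : B.coeff 0 ≠ 0) :
    X ^ n ∣ A - B * W ↔ trunc n ((A : K⟦X⟧) * (B : K⟦X⟧)⁻¹) = trunc n (W : K⟦X⟧) := by
  have hB' : PowerSeries.constantCoeff (B : K⟦X⟧) ≠ 0 := by rwa [constantCoeff_coe]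
  rw [trunc_eq_trunc_iff_X_pow_dvd_sub, ← (isUnit_iff_constantCoeff.mpr hB'.isUnit).dvd_mul_left,
    ← X_pow_dvd_coe_iff]
  congr! 1
  push_cast
  rw [mul_sub, mul_left_comm, PowerSeries.mul_inv_cancel _ hB', mul_one]

theorem eq_trunc_mul_inv_of_X_pow_dvd (hB : B.coeff 0 ≠ 0) (hW : W.degree < n)
    (hdvd : X ^ n ∣ A - B * W) : W = trunc n ((A : K⟦X⟧) * (B : K⟦X⟧)⁻¹) := by
  rw [(X_pow_dvd_sub_mul_iff_trunc_eq hB).mp hdvd]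
  rcases eq_or_ne W 0 with rfl | hW₀
  · simp
  · exact (trunc_coe_eq_self ((natDegree_lt_iff_degree_lt hW₀).mpr hW)).symm

end Field

end Polynomial

theorem stmt14_general {K : Type*} [Field K] (h : ℕ) (hh : 0 < h) (P Q : K[X])
    (hQ : Q.eval 0 ≠ 0) (Z P₁ P₂ Q₁ Q₂ Z₁ Z₂ : K[X])
    (hZ : Z = PowerSeries.trunc (2 * h) ((P : PowerSeries K) * (Q : PowerSeries K)⁻¹))
    (hPbis : P = P₁ + X ^ h * P₂)
    (hQbis : Q = Q₁ + X ^ h * Q₂)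
    (hZbis : Z = Z₁ + X ^ h * Z₂) (hZ₁ : Z₁.degree < (h : WithBot ℕ))
    (hZ₂ : Z₂.degree < (h : WithBot ℕ)) :
    Z₁ = PowerSeries.trunc h ((P₁ : PowerSeries K) * (Q₁ : PowerSeries K)⁻¹) ∧
    X ^ h ∣ P₁ - Q₁ * Z₁ ∧
    Z₂ = PowerSeries.trunc h
      ((((P₁ - Q₁ * Z₁) /ₘ X ^ h + P₂ - Q₂ * Z₁ : K[X]) : PowerSeries K) *
        (Q₁ : PowerSeries K)⁻¹) := by
  have hQ₀ : Q.coeff 0 ≠ 0 := by rwa [coeff_zero_eq_eval_zero]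
  have hQ₁₀ : Q₁.coeff 0 ≠ 0 := by simpa [hQbis, coeff_X_pow_mul', hh.ne] using hQ₀
  have hPQZ : X ^ (2 * h) ∣ P - Q * Z :=
    (X_pow_dvd_sub_mul_iff_trunc_eq hQ₀).mpr (by rw [hZ, PowerSeries.trunc_trunc])
  have hbis : X ^ (2 * h) ∣ (P₁ - Q₁ * Z₁) + X ^ h * (P₂ - Q₂ * Z₁ - Q₁ * Z₂) := by
    have hsplit : (P₁ - Q₁ * Z₁) + X ^ h * (P₂ - Q₂ * Z₁ - Q₁ * Z₂)
        = P - Q * Z + X ^ (2 * h) * (Q₂ * Z₂) := by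
      rw [hPbis, hQbis, hZbis]; ring
    rw [hsplit]
    exact dvd_add hPQZ (dvd_mul_right _ _)
  obtain ⟨hlow, hhigh⟩ := X_pow_dvd_and_X_pow_dvd_of_bisection hbis
  refine ⟨eq_trunc_mul_inv_of_X_pow_dvd hQ₁₀ hZ₁ hlow, hlow,
    eq_trunc_mul_inv_of_X_pow_dvd hQ₁₀ hZ₂ ?_⟩
  convert hhigh using 1
  ring

/-- Divide-and-conquer computation of the truncated power-series quotient
`Z = ⌈X^(2h)⌉(P/Q)`: with bisections `P = P₁ + X^h·P₂`, `Q = Q₁ + X^h·Q₂`,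
`Z = Z₁ + X^h·Z₂`, one has `Z₁ = ⌈X^h⌉(P₁/Q₁)`, `X^h ∣ P₁ − Q₁·Z₁`, and
`Z₂ = ⌈X^h⌉(((P₁ − Q₁·Z₁)/X^h + P₂ − Q₂·Z₁)/Q₁)`. -/
theorem stmt14 {K : Type*} [Field K] (h : ℕ) (hh : 0 < h) (P Q : K[X])
    (hQ : Q.eval 0 ≠ 0) (Z P₁ P₂ Q₁ Q₂ Z₁ Z₂ : K[X])
    (hZ : Z = PowerSeries.trunc (2 * h) ((P : PowerSeries K) * (Q : PowerSeries K)⁻¹))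
    (hPbis : P = P₁ + X ^ h * P₂) (hP₁ : P₁.degree < (h : WithBot ℕ))
    (hQbis : Q = Q₁ + X ^ h * Q₂) (hQ₁ : Q₁.degree < (h : WithBot ℕ))
    (hZbis : Z = Z₁ + X ^ h * Z₂) (hZ₁ : Z₁.degree < (h : WithBot ℕ))
    (hZ₂ : Z₂.degree < (h : WithBot ℕ)) :
    Z₁ = PowerSeries.trunc h ((P₁ : PowerSeries K) * (Q₁ : PowerSeries K)⁻¹) ∧
    X ^ h ∣ P₁ - Q₁ * Z₁ ∧
    Z₂ = PowerSeries.trunc h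
      ((((P₁ - Q₁ * Z₁) /ₘ X ^ h + P₂ - Q₂ * Z₁ : K[X]) : PowerSeries K) *
        (Q₁ : PowerSeries K)⁻¹) :=
  stmt14_general h hh P Q hQ Z P₁ P₂ Q₁ Q₂ Z₁ Z₂ hZ hPbis hQbis hZbis hZ₁ hZ₂
end
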